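/- arXiv:2208.09731 — 2 statements merged into one kernel-verified Lean document; each statement's English description precedes it below -/
import Mathlib

section
/- Let Z be a zero forcing set of A ∈ F^{n×n} with terminal set T, |T| = |Z| = k. Define the core matrix B ∈ F^{T×Z} by B = (R A)_{T,Z}, where R(b) = b − A·Forcing(A,Z,b). Suppose Ax = b has at least one solution. Then for every y ∈ F^Z with B y = (R b)_T, there exists x ∈ F^n with Ax = b and x_Z = y. -/
open Matrix

section ZeroForcing

variable {V : Type*}

/-- The blue-coloring closure of the zero forcing process on a directed graph with
edge relation `E`, starting from the initially blue set `Z`:  a blue vertex `u` all of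
whose out-neighbors except `v` are already blue forces `v` to become blue. -/
inductive Blue (E : V → V → Prop) (Z : Set V) : V → Prop
  | init {v : V} : v ∈ Z → Blue E Z v
  | force {u v : V} : Blue E Z u → E u v →
      (∀ w, E u w → w ≠ v → Blue E Z w) → Blue E Z v

/-- `Z` is a zero forcing set if the forcing process colors every vertex blue. -/
def IsZeroForcingSet (E : V → V → Prop) (Z : Set V) : Prop := ∀ v, Blue E Z v

end ZeroForcing

section ForcingAlg

variable {F : Type*} [Field F] {n : ℕ}

/-- The off-diagonal adjacency pattern of a matrix: `u → v` iff `u ≠ v` and `A u v ≠ 0`. -/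
def adjOf (A : Matrix (Fin n) (Fin n) F) (u v : Fin n) : Prop := u ≠ v ∧ A u v ≠ 0

/-- A chronological list of forces for the zero forcing set `Z` of `A`:  `π` lists the
vertices outside `Z` in the order they are forced, and `par u` is the forcing parent of
`u` (the vertex that forces `u`). -/
structure ForcingOrder (A : Matrix (Fin n) (Fin n) F) (Z : Finset (Fin n)) where
  π : List (Fin n)
  par : Fin n → Fin n
  nodup : π.Nodup
  mem_iff : ∀ v, v ∈ π ↔ v ∉ Z
  par_ne_self : ∀ u ∈ π, par u ≠ u
  par_edge : ∀ u ∈ π, A (par u) u ≠ 0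
  par_blue : ∀ u ∈ π, par u ∈ Z ∨ (par u ∈ π ∧ π.idxOf (par u) < π.idxOf u)
  others_blue : ∀ u ∈ π, ∀ w, w ≠ par u → w ≠ u → A (par u) w ≠ 0 →
      (w ∈ Z ∨ (w ∈ π ∧ π.idxOf w < π.idxOf u))
  par_inj : ∀ u ∈ π, ∀ v ∈ π, par u = par v → u = v

/-- One step of the forcing algorithm: `x_u ← (b_{u↑} − A_{u↑,*} x) / A_{u↑,u}`. -/
def forcingStep (A : Matrix (Fin n) (Fin n) F) (par : Fin n → Fin n)
    (b : Fin n → F) (x : Fin n → F) (u : Fin n) : Fin n → F :=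
  Function.update x u ((b (par u) - A (par u) ⬝ᵥ x) / A (par u) u)

/-- The forcing algorithm `Forcing(A, Z, b)`: starting from `x = 0`, iterate the forcing
update over the vertices outside `Z` in forcing order. -/
def Forcing (A : Matrix (Fin n) (Fin n) F) {Z : Finset (Fin n)}
    (fo : ForcingOrder A Z) (b : Fin n → F) : Fin n → F :=
  fo.π.foldl (forcingStep A fo.par b) 0

/-- The map `R(b) = b − A · Forcing(A, Z, b)`. -/
def Rmap (A : Matrix (Fin n) (Fin n) F) {Z : Finset (Fin n)}
    (fo : ForcingOrder A Z) (b : Fin n → F) : Fin n → F :=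
  b - A.mulVec (Forcing A fo b)

/-- A vertex is a terminal if it has no forcing child. -/
def IsTerminal {A : Matrix (Fin n) (Fin n) F} {Z : Finset (Fin n)}
    (fo : ForcingOrder A Z) (v : Fin n) : Prop :=
  ∀ u ∈ fo.π, fo.par u ≠ v

instance {A : Matrix (Fin n) (Fin n) F} {Z : Finset (Fin n)} (fo : ForcingOrder A Z) :
    DecidablePred (IsTerminal fo) := fun v =>
  decidable_of_iff (∀ u ∈ fo.π, fo.par u ≠ v) Iff.rfl

/-- The core matrix `B = (R A)_{T,Z}`: its column indexed by `z ∈ Z` is `(R a_z)_T`,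
where `a_z` is the `z`-th column of `A` and `T` is the terminal set. -/
def coreMatrix (A : Matrix (Fin n) (Fin n) F) {Z : Finset (Fin n)}
    (fo : ForcingOrder A Z) :
    Matrix {v // IsTerminal fo v} {v // v ∈ Z} F :=
  Matrix.of fun t z => Rmap A fo (fun i => A i z.1) t.1

end ForcingAlg

/-!
Extend `y` by zero to `ỹ` and put `c = b - A ỹ`. The forcing step at `u` solves row `par u` of
`A x = c`, and the later steps do not touch that row, so `R c` vanishes at every forcing parent.
By linearity of `R`, `(R c)_T = (R b)_T - B y = 0`. Every vertex is a parent or a terminal, hence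
`R c = 0`, i.e. `A · Forcing(c) = c`, and `x = ỹ + Forcing(c)` solves `A x = b`; it agrees with
`y` on `Z` because `Forcing(c)` vanishes there.
-/

namespace List

theorem Nodup.idxOf_lt_idxOf_of_mem {α : Type*} [DecidableEq α] {l₁ l₂ : List α} {u w : α}
    (hl : (l₁ ++ u :: l₂).Nodup) (hw : w ∈ l₂) :
    (l₁ ++ u :: l₂).idxOf u < (l₁ ++ u :: l₂).idxOf w := by
  obtain ⟨-, hnd₂, hdisj⟩ := nodup_append.mp hl
  have hu₁ : u ∉ l₁ := fun h => hdisj u h u mem_cons_self rfl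
  have hw₁ : w ∉ l₁ := fun h => hdisj w h w (mem_cons_of_mem _ hw) rfl
  have hwu : u ≠ w := fun h => (nodup_cons.mp hnd₂).1 (h ▸ hw)
  rw [idxOf_append_of_notMem hu₁, idxOf_append_of_notMem hw₁, idxOf_cons_self,
    idxOf_cons_ne _ hwu]
  omega

end List

theorem dotProduct_update {R ι : Type*} [Ring R] [Fintype ι] [DecidableEq ι] (w x : ι → R)
    (u : ι) (c : R) : w ⬝ᵥ Function.update x u c = w ⬝ᵥ x + w u * (c - x u) := by
  have hupdate : Function.update x u c = x + Pi.single u (c - x u) := by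
    ext j
    rcases eq_or_ne j u with rfl | hj <;> simp [*]
  rw [hupdate, dotProduct_add, dotProduct_single]

section ForcingLinear

variable {F : Type*} [Field F] {n : ℕ}

namespace ForcingOrder

variable {A : Matrix (Fin n) (Fin n) F} {Z : Finset (Fin n)} (fo : ForcingOrder A Z)

theorem apply_par_eq_zero_of_idxOf_lt {u w : Fin n} (hu : u ∈ fo.π) (hw : w ∈ fo.π)
    (hlt : fo.π.idxOf u < fo.π.idxOf w) : A (fo.par u) w = 0 := by
  by_contra hne
  have hwZ : w ∉ Z := (fo.mem_iff w).mp hw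
  have hwp : w ≠ fo.par u := by
    rintro rfl
    rcases fo.par_blue u hu with hZ | ⟨-, hidx⟩
    · exact hwZ hZ
    · omega
  rcases fo.others_blue u hu w hwp (by rintro rfl; omega) hne with hZ | ⟨-, hidx⟩
  · exact hwZ hZ
  · omega

end ForcingOrder

section ForcingStep

variable (A : Matrix (Fin n) (Fin n) F) (par : Fin n → Fin n)

theorem forcingStep_add (b₁ b₂ x₁ x₂ : Fin n → F) (u : Fin n) :
    forcingStep A par (b₁ + b₂) (x₁ + x₂) u
      = forcingStep A par b₁ x₁ u + forcingStep A par b₂ x₂ u := by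
  rw [forcingStep, forcingStep, forcingStep, ← Function.update_add, Pi.add_apply, dotProduct_add]
  congr 1
  ring

theorem forcingStep_smul (c : F) (b x : Fin n → F) (u : Fin n) :
    forcingStep A par (c • b) (c • x) u = c • forcingStep A par b x u := by
  rw [forcingStep, forcingStep, ← Function.update_smul, Pi.smul_apply, dotProduct_smul,
    smul_eq_mul, smul_eq_mul, smul_eq_mul]
  congr 1
  ring

theorem foldl_forcingStep_add (b₁ b₂ : Fin n → F) (l : List (Fin n)) (x₁ x₂ : Fin n → F) :
    l.foldl (forcingStep A par (b₁ + b₂)) (x₁ + x₂)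
      = l.foldl (forcingStep A par b₁) x₁ + l.foldl (forcingStep A par b₂) x₂ := by
  induction l generalizing x₁ x₂ with
  | nil => rfl
  | cons u l ih => simp only [List.foldl_cons, forcingStep_add, ih]

theorem foldl_forcingStep_smul (c : F) (b : Fin n → F) (l : List (Fin n)) (x : Fin n → F) :
    l.foldl (forcingStep A par (c • b)) (c • x) = c • l.foldl (forcingStep A par b) x := by
  induction l generalizing x with
  | nil => rfl
  | cons u l ih => simp only [List.foldl_cons, forcingStep_smul, ih]

theorem foldl_forcingStep_apply_of_notMem (b : Fin n → F) {l : List (Fin n)} (x : Fin n → F)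
    {v : Fin n} (hv : v ∉ l) : l.foldl (forcingStep A par b) x v = x v := by
  induction l generalizing x with
  | nil => rfl
  | cons u l ih =>
    rw [List.mem_cons, not_or] at hv
    rw [List.foldl_cons, ih _ hv.2, forcingStep, Function.update_of_ne hv.1]

theorem dotProduct_forcingStep_of_apply_eq_zero (b x : Fin n → F) {u : Fin n}
    (hu : A (par u) u ≠ 0) (hx : x u = 0) :
    A (par u) ⬝ᵥ forcingStep A par b x u = b (par u) := by
  rw [forcingStep, dotProduct_update, hx, sub_zero, mul_div_cancel₀ _ hu]
  ring

theorem dotProduct_foldl_forcingStep_of_forall_eq_zero (b : Fin n → F) {p : Fin n}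
    {l : List (Fin n)} (hl : ∀ w ∈ l, A p w = 0) (x : Fin n → F) :
    A p ⬝ᵥ l.foldl (forcingStep A par b) x = A p ⬝ᵥ x := by
  induction l generalizing x with
  | nil => rfl
  | cons u l ih =>
    rw [List.foldl_cons, ih (fun w hw => hl w (List.mem_cons_of_mem _ hw)), forcingStep,
      dotProduct_update, hl u List.mem_cons_self, zero_mul, add_zero]

end ForcingStep

section Forcing

variable (A : Matrix (Fin n) (Fin n) F) {Z : Finset (Fin n)} (fo : ForcingOrder A Z)

def forcingLinearMap : (Fin n → F) →ₗ[F] (Fin n → F) where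
  toFun := Forcing A fo
  map_add' b₁ b₂ := by
    simpa only [Forcing, add_zero] using foldl_forcingStep_add A fo.par b₁ b₂ fo.π 0 0
  map_smul' c b := by
    simpa only [Forcing, smul_zero, RingHom.id_apply] using
      foldl_forcingStep_smul A fo.par c b fo.π 0

def rmapLinearMap : (Fin n → F) →ₗ[F] (Fin n → F) :=
  LinearMap.id - A.mulVecLin ∘ₗ forcingLinearMap A fo

theorem rmapLinearMap_apply (b : Fin n → F) : rmapLinearMap A fo b = Rmap A fo b := rfl

theorem forcing_apply_of_mem (b : Fin n → F) {i : Fin n} (hi : i ∈ Z) :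
    Forcing A fo b i = 0 :=
  foldl_forcingStep_apply_of_notMem A fo.par b 0 fun h => (fo.mem_iff i).mp h hi

theorem rmap_par_eq_zero (b : Fin n → F) {u : Fin n} (hu : u ∈ fo.π) :
    Rmap A fo b (fo.par u) = 0 := by
  obtain ⟨l₁, l₂, hsplit⟩ := List.append_of_mem hu
  have hnd : (l₁ ++ u :: l₂).Nodup := hsplit ▸ fo.nodup
  have hu₁ : u ∉ l₁ := fun h => List.disjoint_of_nodup_append hnd h List.mem_cons_self
  have hlater : ∀ w ∈ l₂, A (fo.par u) w = 0 := fun w hw =>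
    fo.apply_par_eq_zero_of_idxOf_lt hu (hsplit ▸ by simp [hw])
      (hsplit ▸ hnd.idxOf_lt_idxOf_of_mem hw)
  have hsolve : A (fo.par u) ⬝ᵥ Forcing A fo b = b (fo.par u) := by
    rw [Forcing, hsplit, List.foldl_append, List.foldl_cons,
      dotProduct_foldl_forcingStep_of_forall_eq_zero A fo.par b hlater,
      dotProduct_forcingStep_of_apply_eq_zero A fo.par b _ (fo.par_edge u hu)
        (foldl_forcingStep_apply_of_notMem A fo.par b 0 hu₁)]
  rw [Rmap, Pi.sub_apply, mulVec, hsolve, sub_self]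

theorem mulVec_forcing_of_rmap_terminal_eq_zero {b : Fin n → F}
    (hT : ∀ t, IsTerminal fo t → Rmap A fo b t = 0) : A *ᵥ Forcing A fo b = b := by
  refine (sub_eq_zero.mp (funext fun v => ?_)).symm
  by_cases ht : IsTerminal fo v
  · exact hT v ht
  · obtain ⟨u, hu, rfl⟩ : ∃ u ∈ fo.π, fo.par u = v := by
      simpa [IsTerminal] using ht
    exact rmap_par_eq_zero A fo b hu

theorem coreMatrix_mulVec (y : Z → F) (t : {v // IsTerminal fo v}) :
    (coreMatrix A fo *ᵥ y) t = Rmap A fo (A *ᵥ ∑ z : Z, Pi.single z.1 (y z)) t := by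
  rw [← rmapLinearMap_apply, mulVec_sum, map_sum]
  simp only [coreMatrix, mulVec, dotProduct, of_apply, Finset.univ_eq_attach,
    ← rmapLinearMap_apply, mulVec_single, op_smul_eq_smul, map_smul, Finset.sum_apply,
    Pi.smul_apply, smul_eq_mul]
  exact Finset.sum_congr rfl fun z _ => mul_comm _ _

end Forcing

end ForcingLinear

theorem stmt11_general {F : Type*} [Field F] {n : ℕ} (A : Matrix (Fin n) (Fin n) F)
    (Z : Finset (Fin n))
    (fo : ForcingOrder A Z) (b : Fin n → F)
    (y : {v // v ∈ Z} → F)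
    (hy : (coreMatrix A fo).mulVec y = fun t => Rmap A fo b t.1) :
    ∃ x : Fin n → F, A.mulVec x = b ∧ ∀ (i : Fin n) (h : i ∈ Z), x i = y ⟨i, h⟩ := by
  set e : Fin n → F := ∑ z : Z, Pi.single z.1 (y z) with he
  set c : Fin n → F := b - A *ᵥ e
  have hc : ∀ t, IsTerminal fo t → Rmap A fo c t = 0 := fun t ht => by
    rw [← rmapLinearMap_apply, map_sub, Pi.sub_apply, rmapLinearMap_apply,
      rmapLinearMap_apply, ← coreMatrix_mulVec A fo y ⟨t, ht⟩, hy, sub_self]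
  refine ⟨e + Forcing A fo c, ?_, fun i hi => ?_⟩
  · rw [mulVec_add, mulVec_forcing_of_rmap_terminal_eq_zero A fo hc, add_sub_cancel]
  · rw [Pi.add_apply, forcing_apply_of_mem A fo c hi, add_zero, he, Finset.sum_apply,
      Fintype.sum_eq_single ⟨i, hi⟩ fun z hz =>
        Pi.single_eq_of_ne (fun h => hz (Subtype.ext h.symm)) _, Pi.single_eq_same]

/-- if `A x = b` has a solution, then every solution `y` of
`B y = (R b)_T`, where `B` is the core matrix, lifts to a solution `x` of `A x = b`
with `x_Z = y`. -/
theorem stmt11 {F : Type*} [Field F] {n : ℕ} (A : Matrix (Fin n) (Fin n) F)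
    (Z : Finset (Fin n)) (hZ : IsZeroForcingSet (adjOf A) ↑Z)
    (fo : ForcingOrder A Z) (b : Fin n → F)
    (hsol : ∃ x, A.mulVec x = b)
    (y : {v // v ∈ Z} → F)
    (hy : (coreMatrix A fo).mulVec y = fun t => Rmap A fo b t.1) :
    ∃ x : Fin n → F, A.mulVec x = b ∧ ∀ (i : Fin n) (h : i ∈ Z), x i = y ⟨i, h⟩ :=
  stmt11_general A Z fo b y hy
end

section
/- Let Z be a zero forcing set of A ∈ F^{n×n}. Then every x ∈ ker(A) is uniquely determined by its restriction x_Z; consequently dim ker(A) ≤ |Z|, i.e., the nullity of A is at most the zero forcing number of its graph. -/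
open Matrix

section KernelRestriction

variable {F : Type*} [Field F] {n : ℕ}

/-- Row `u` of `A x = 0` reads `A u v * x v = -∑_{w ≠ v} A u w * x w`, so a force `u → v`
carries the vanishing of `x` on `u` and its other out-neighbours over to `v`. -/
theorem Blue.apply_eq_zero_of_mulVec_eq_zero {A : Matrix (Fin n) (Fin n) F}
    {Z : Set (Fin n)} {x : Fin n → F} (hx : A *ᵥ x = 0) (hxZ : ∀ i ∈ Z, x i = 0)
    {v : Fin n} (hv : Blue (adjOf A) Z v) : x v = 0 := by
  induction hv with
  | init hvZ => exact hxZ _ hvZ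
  | @force u v _ huv _ ihu ihw =>
    have hrow : ∑ w, A u w * x w = A u v * x v := by
      refine Finset.sum_eq_single v (fun w _ hwv => ?_) (by simp)
      by_cases hwu : w = u
      · rw [hwu, ihu, mul_zero]
      by_cases hAuw : A u w = 0
      · rw [hAuw, zero_mul]
      · rw [ihw w ⟨Ne.symm hwu, hAuw⟩ hwv, mul_zero]
    have hrow_zero : ∑ w, A u w * x w = 0 := congrFun hx u
    exact (mul_eq_zero.mp (hrow ▸ hrow_zero)).resolve_left huv.2

theorem IsZeroForcingSet.eq_zero_of_mulVec_eq_zero {A : Matrix (Fin n) (Fin n) F}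
    {Z : Set (Fin n)} (hZ : IsZeroForcingSet (adjOf A) Z) {x : Fin n → F}
    (hx : A *ᵥ x = 0) (hxZ : ∀ i ∈ Z, x i = 0) : x = 0 :=
  funext fun v => (hZ v).apply_eq_zero_of_mulVec_eq_zero hx hxZ

theorem IsZeroForcingSet.eq_of_mulVec_eq_zero {A : Matrix (Fin n) (Fin n) F}
    {Z : Set (Fin n)} (hZ : IsZeroForcingSet (adjOf A) Z) {x y : Fin n → F}
    (hx : A *ᵥ x = 0) (hy : A *ᵥ y = 0) (hxy : ∀ i ∈ Z, x i = y i) : x = y :=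
  sub_eq_zero.mp <| hZ.eq_zero_of_mulVec_eq_zero (by rw [mulVec_sub, hx, hy, sub_zero])
    fun i hi => sub_eq_zero.mpr (hxy i hi)

def kerRestrict (A : Matrix (Fin n) (Fin n) F) (Z : Finset (Fin n)) :
    LinearMap.ker A.mulVecLin →ₗ[F] (Z → F) :=
  (LinearMap.funLeft F F ((↑) : Z → Fin n)).comp (LinearMap.ker A.mulVecLin).subtype

theorem IsZeroForcingSet.finrank_ker_le {A : Matrix (Fin n) (Fin n) F}
    {Z : Finset (Fin n)} (hZ : IsZeroForcingSet (adjOf A) ↑Z) :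
    Module.finrank F (LinearMap.ker A.mulVecLin) ≤ Z.card := by
  have hinj : Function.Injective (kerRestrict A Z) := fun x y hxy =>
    Subtype.ext <| hZ.eq_of_mulVec_eq_zero x.2 y.2 fun i hi => congrFun hxy ⟨i, hi⟩
  simpa using LinearMap.finrank_le_finrank_of_injective hinj

end KernelRestriction

/-- every kernel vector of `A` is uniquely determined by its restriction
to a zero forcing set `Z`; consequently the nullity of `A` is at most `|Z|`. -/
theorem stmt18 {F : Type*} [Field F] {n : ℕ} (A : Matrix (Fin n) (Fin n) F)
    (Z : Finset (Fin n)) (hZ : IsZeroForcingSet (adjOf A) ↑Z) :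
    (∀ x y : Fin n → F, A.mulVec x = 0 → A.mulVec y = 0 →
      (∀ i ∈ Z, x i = y i) → x = y) ∧
    Module.finrank F (LinearMap.ker A.mulVecLin) ≤ Z.card :=
  ⟨fun _ _ hx hy hxy => hZ.eq_of_mulVec_eq_zero hx hy hxy, hZ.finrank_ker_le⟩
end
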